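/- Let K be a field, m ≥ 1, n ≥ 1, and γ : Fin n → ℤ, and assume that every residue class modulo m is attained by γ (for every r : ZMod m there is j with (γ j : ZMod m) = r). Then the ℤ-graded matrix ring M_n(K[x^m, x^{-m}])(γ) is graded unit-regular — i.e., for every d ∈ ℤ and every matrix A homogeneous of degree d there exist U homogeneous of degree -d and V homogeneous of degree d with U*V = 1, V*U = 1 and A*U*A = A — if and only if there is a positive integer k with n = k*m such that for every r : ZMod m the number of indices j ∈ Fin n with (γ j : ZMod m) = r equals k. -/

import Mathlib

/-- A matrix over the Laurent polynomial ring `K[x^m, x^{-m}]` (modeled inside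
`LaurentPolynomial K`, with degree-`e` component `K·x^e` when `m ∣ e` and `0` otherwise) is
homogeneous of degree `d` with respect to the shift vector `γ` if each entry `A i j` lies in
the degree-`(d - γ i + γ j)` component.  These components define the `ℤ`-graded matrix ring
`Mₙ(K[x^m, x^{-m}])(γ)`. -/
def MatrixHomogeneousLaurent {K : Type*} [Field K] (m : ℕ) {n : ℕ} (γ : Fin n → ℤ) (d : ℤ)
    (A : Matrix (Fin n) (Fin n) (LaurentPolynomial K)) : Prop :=
  ∀ i j : Fin n,
    (((m : ℤ) ∣ (d - γ i + γ j)) →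
      ∃ c : K, A i j = LaurentPolynomial.C c * LaurentPolynomial.T (d - γ i + γ j)) ∧
    (¬ ((m : ℤ) ∣ (d - γ i + γ j)) → A i j = 0)

open LaurentPolynomial

open Module Submodule

theorem exists_unit_inner_inverse {K V : Type*} [Field K] [AddCommGroup V] [Module K V]
    [FiniteDimensional K V] (f : V →ₗ[K] V) :
    ∃ g : V ≃ₗ[K] V, ∀ v, f (g (f v)) = f v := by
  obtain ⟨c, hc⟩ := Submodule.exists_isCompl (LinearMap.ker f)
  obtain ⟨d, hd⟩ := Submodule.exists_isCompl (LinearMap.range f)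
  -- e1 : c ≃ₗ range f
  have hinj : ∀ x : c, f x = 0 → (x : V) = 0 := by
    intro x hx
    have : (x : V) ∈ (LinearMap.ker f) ⊓ c := ⟨hx, x.2⟩
    rwa [hc.inf_eq_bot, Submodule.mem_bot] at this
  let f1 : c →ₗ[K] LinearMap.range f :=
    (f.domRestrict c).codRestrict _ (fun x => LinearMap.mem_range_self f (x : V))
  have hf1inj : Function.Injective f1 := by
    intro x y h
    have : f ((x : V) - y) = 0 := by
      have := congrArg (Subtype.val) h
      simp only [f1, LinearMap.codRestrict_apply, LinearMap.domRestrict_apply] at this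
      rw [map_sub, sub_eq_zero]; exact this
    have := hinj (x - y) (by simpa using this)
    exact Subtype.ext (by simpa [sub_eq_zero] using this)
  have hf1surj : Function.Surjective f1 := by
    rintro ⟨w, v, rfl⟩
    obtain ⟨vk, hvk, vc, hvc, rfl⟩ : ∃ vk ∈ LinearMap.ker f, ∃ vc ∈ c, vk + vc = v := by
      have := Submodule.codisjoint_iff_exists_add_eq.mp hc.codisjoint v
      simpa using this
    refine ⟨⟨vc, hvc⟩, Subtype.ext ?_⟩
    simp [f1, map_add, LinearMap.mem_ker.mp hvk]; rfl
  let e1 : c ≃ₗ[K] LinearMap.range f := LinearEquiv.ofBijective f1 ⟨hf1inj, hf1surj⟩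
  have hdim : finrank K d = finrank K (LinearMap.ker f) := by
    have h1 := Submodule.finrank_add_eq_of_isCompl hd
    have h2 := LinearMap.finrank_range_add_finrank_ker f
    omega
  let e2 : d ≃ₗ[K] LinearMap.ker f := LinearEquiv.ofFinrankEq _ _ hdim
  let g : V ≃ₗ[K] V :=
    ((Submodule.prodEquivOfIsCompl _ _ hd).symm.trans
      (e1.symm.prodCongr e2)).trans (Submodule.prodEquivOfIsCompl c (LinearMap.ker f) hc.symm)
  refine ⟨g, fun v => ?_⟩
  have hmem : f v ∈ LinearMap.range f := LinearMap.mem_range_self f v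
  have h1 : (Submodule.prodEquivOfIsCompl (LinearMap.range f) d hd).symm (f v)
      = ((⟨f v, hmem⟩ : LinearMap.range f), (0 : d)) := by
    rw [LinearEquiv.symm_apply_eq]
    simp
  have hg : g (f v) = (e1.symm ⟨f v, hmem⟩ : V) := by
    show (Submodule.prodEquivOfIsCompl _ _ hc.symm)
      ((e1.symm.prodCongr e2) ((Submodule.prodEquivOfIsCompl _ _ hd).symm (f v))) = _
    rw [h1]
    simp [Submodule.coe_prodEquivOfIsCompl']
  rw [hg]
  have h2 : (f1 (e1.symm ⟨f v, hmem⟩) : V) = f v := by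
    have h4 := e1.apply_symm_apply ⟨f v, hmem⟩
    have h3 : e1 (e1.symm ⟨f v, hmem⟩) = f1 (e1.symm ⟨f v, hmem⟩) :=
      LinearEquiv.ofBijective_apply _ _
    rw [h3] at h4
    exact congrArg Subtype.val h4
  exact h2

theorem matrix_exists_unit_inner_inverse {K : Type*} [Field K] {k : ℕ}
    (N : Matrix (Fin k) (Fin k) K) :
    ∃ X Y : Matrix (Fin k) (Fin k) K, X * Y = 1 ∧ Y * X = 1 ∧ N * X * N = N := by
  obtain ⟨g, hg⟩ := exists_unit_inner_inverse (Matrix.toLin' N)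
  refine ⟨LinearMap.toMatrix' g.toLinearMap, LinearMap.toMatrix' g.symm.toLinearMap, ?_, ?_, ?_⟩
  · rw [← LinearMap.toMatrix'_comp]
    have : g.toLinearMap.comp g.symm.toLinearMap = LinearMap.id := by
      ext v; simp
    rw [this, LinearMap.toMatrix'_id]
  · rw [← LinearMap.toMatrix'_comp]
    have : g.symm.toLinearMap.comp g.toLinearMap = LinearMap.id := by
      ext v; simp
    rw [this, LinearMap.toMatrix'_id]
  · have hN : N = LinearMap.toMatrix' (Matrix.toLin' N) := (LinearMap.toMatrix'_toLin' N).symm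
    conv_lhs => rw [hN]
    conv_rhs => rw [hN]
    rw [← LinearMap.toMatrix'_comp, ← LinearMap.toMatrix'_comp]
    congr 1
    exact LinearMap.ext fun v => hg v

namespace LMGUR
variable {K : Type*} [Field K] {n : ℕ}

/-- Support condition for coefficient matrices. -/
def GSupp (m : ℕ) (γ : Fin n → ℤ) (d : ℤ) (a : Matrix (Fin n) (Fin n) K) : Prop :=
  ∀ i j, ¬ ((m : ℤ) ∣ (d - γ i + γ j)) → a i j = 0

open Classical in
/-- Build a homogeneous Laurent matrix from a coefficient matrix. -/
noncomputable def toL (m : ℕ) (γ : Fin n → ℤ) (d : ℤ) (a : Matrix (Fin n) (Fin n) K) :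
    Matrix (Fin n) (Fin n) (LaurentPolynomial K) :=
  fun i j => if (m : ℤ) ∣ (d - γ i + γ j) then C (a i j) * T (d - γ i + γ j) else 0

theorem toL_homog (m : ℕ) (γ : Fin n → ℤ) (d : ℤ) (a : Matrix (Fin n) (Fin n) K) :
    MatrixHomogeneousLaurent m γ d (toL m γ d a) := by
  intro i j
  constructor
  · intro h
    exact ⟨a i j, by simp [toL, h]⟩
  · intro h
    simp [toL, h]

theorem exists_coeff {m : ℕ} {γ : Fin n → ℤ} {d : ℤ}
    {A : Matrix (Fin n) (Fin n) (LaurentPolynomial K)}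
    (hA : MatrixHomogeneousLaurent m γ d A) :
    ∃ a : Matrix (Fin n) (Fin n) K, GSupp m γ d a ∧ A = toL m γ d a := by
  classical
  refine ⟨fun i j => if h : (m : ℤ) ∣ (d - γ i + γ j) then ((hA i j).1 h).choose else 0, ?_, ?_⟩
  · intro i j h
    simp [h]
  · funext i j
    show A i j = _
    unfold toL
    by_cases h : (m : ℤ) ∣ (d - γ i + γ j)
    · rw [if_pos h]
      simp only []
      rw [dif_pos h]
      exact ((hA i j).1 h).choose_spec
    · rw [if_neg h, (hA i j).2 h]

theorem CT_mul (x y : K) (e f : ℤ) :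
    (C x * T e) * (C y * T f) = (C (x * y) * T (e + f) : LaurentPolynomial K) := by
  rw [T_add, map_mul]; ring

theorem toL_mul (m : ℕ) (γ : Fin n → ℤ) (d d' : ℤ) (a b : Matrix (Fin n) (Fin n) K)
    (ha : GSupp m γ d a) (hb : GSupp m γ d' b) :
    toL m γ d a * toL m γ d' b = toL m γ (d + d') (a * b) := by
  classical
  funext i j
  rw [Matrix.mul_apply]
  show _ = toL m γ (d + d') (a * b) i j
  unfold toL
  by_cases hT : (m : ℤ) ∣ (d + d' - γ i + γ j)
  · rw [if_pos hT, Matrix.mul_apply, map_sum, Finset.sum_mul]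
    refine Finset.sum_congr rfl fun l _ => ?_
    by_cases h1 : (m : ℤ) ∣ (d - γ i + γ l)
    · have h2 : (m : ℤ) ∣ (d' - γ l + γ j) := by
        have : d' - γ l + γ j = (d + d' - γ i + γ j) - (d - γ i + γ l) := by ring
        rw [this]; exact dvd_sub hT h1
      rw [if_pos h1, if_pos h2, CT_mul,
        show (d - γ i + γ l) + (d' - γ l + γ j) = d + d' - γ i + γ j by ring]
    · rw [if_neg h1, ha i l h1]
      simp
  · rw [if_neg hT]
    apply Finset.sum_eq_zero
    intro l _
    by_cases h1 : (m : ℤ) ∣ (d - γ i + γ l)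
    · have h2 : ¬ (m : ℤ) ∣ (d' - γ l + γ j) := by
        intro h2
        apply hT
        have : d + d' - γ i + γ j = (d - γ i + γ l) + (d' - γ l + γ j) := by ring
        rw [this]; exact dvd_add h1 h2
      rw [if_neg h2, mul_zero]
    · rw [if_neg h1, zero_mul]

theorem GSupp_mul {m : ℕ} {γ : Fin n → ℤ} {d d' : ℤ} {a b : Matrix (Fin n) (Fin n) K}
    (ha : GSupp m γ d a) (hb : GSupp m γ d' b) : GSupp m γ (d + d') (a * b) := by
  intro i j hT
  rw [Matrix.mul_apply]
  apply Finset.sum_eq_zero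
  intro l _
  by_cases h1 : (m : ℤ) ∣ (d - γ i + γ l)
  · have h2 : ¬ (m : ℤ) ∣ (d' - γ l + γ j) := by
      intro h2
      apply hT
      have : d + d' - γ i + γ j = (d - γ i + γ l) + (d' - γ l + γ j) := by ring
      rw [this]; exact dvd_add h1 h2
    rw [hb l j h2, mul_zero]
  · rw [ha i l h1, zero_mul]

theorem toL_one (m : ℕ) (γ : Fin n → ℤ) : toL m γ 0 (1 : Matrix (Fin n) (Fin n) K) = 1 := by
  classical
  funext i j
  show toL m γ 0 1 i j = (1 : Matrix (Fin n) (Fin n) (LaurentPolynomial K)) i j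
  unfold toL
  by_cases hij : i = j
  · subst hij
    have h : (m : ℤ) ∣ (0 - γ i + γ i) := by simp
    rw [if_pos h]
    simp [Matrix.one_apply]
  · by_cases h : (m : ℤ) ∣ (0 - γ i + γ j)
    · rw [if_pos h]
      simp [Matrix.one_apply_ne hij, Matrix.one_apply_ne hij]
    · rw [if_neg h]
      simp [Matrix.one_apply_ne hij]

theorem GSupp_one (m : ℕ) (γ : Fin n → ℤ) : GSupp m γ 0 (1 : Matrix (Fin n) (Fin n) K) := by
  intro i j h
  by_cases hij : i = j
  · exfalso; apply h; subst hij; simp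
  · exact Matrix.one_apply_ne hij

theorem toL_inj {m : ℕ} {γ : Fin n → ℤ} {d : ℤ} {a b : Matrix (Fin n) (Fin n) K}
    (ha : GSupp m γ d a) (hb : GSupp m γ d b) (h : toL m γ d a = toL m γ d b) : a = b := by
  classical
  funext i j
  have := congrFun (congrFun h i) j
  unfold toL at this
  by_cases hd : (m : ℤ) ∣ (d - γ i + γ j)
  · rw [if_pos hd, if_pos hd, ← single_eq_C_mul_T, ← single_eq_C_mul_T] at this
    exact AddMonoidAlgebra.single_right_injective this
  · rw [ha i j hd, hb i j hd]

theorem dvd_iff_res (m : ℕ) (d x y : ℤ) :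
    (m : ℤ) ∣ (d - x + y) ↔ ((x : ZMod m) = (d : ZMod m) + (y : ZMod m)) := by
  rw [← ZMod.intCast_zmod_eq_zero_iff_dvd]
  push_cast
  rw [sub_add_eq_add_sub, sub_eq_zero, eq_comm]

theorem gsupp_iff {m : ℕ} {γ : Fin n → ℤ} {d : ℤ} {a : Matrix (Fin n) (Fin n) K} :
    GSupp m γ d a ↔
      ∀ i j : Fin n, ((γ i : ZMod m) ≠ (d : ZMod m) + (γ j : ZMod m)) → a i j = 0 := by
  unfold GSupp
  simp_rw [dvd_iff_res]

theorem card_eq_of_mul_eq_one {α β : Type*} [Fintype α] [Fintype β] [DecidableEq α]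
    [DecidableEq β] (M : Matrix α β K) (M' : Matrix β α K)
    (h1 : M * M' = 1) (h2 : M' * M = 1) : Fintype.card α = Fintype.card β := by
  have hfg : (Matrix.toLin' M).comp (Matrix.toLin' M') = LinearMap.id := by
    rw [← Matrix.toLin'_mul, h1, Matrix.toLin'_one]
  have hgf : (Matrix.toLin' M').comp (Matrix.toLin' M) = LinearMap.id := by
    rw [← Matrix.toLin'_mul, h2, Matrix.toLin'_one]
  let e : (β → K) ≃ₗ[K] (α → K) := LinearEquiv.ofLinear (Matrix.toLin' M) (Matrix.toLin' M') hfg hgf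
  have := e.finrank_eq
  simpa [Module.finrank_fintype_fun_eq_card] using this.symm

theorem n_eq (m k : ℕ) [NeZero m] (γ : Fin n → ℤ)
    (hcard : ∀ s : ZMod m,
      (Finset.univ.filter (fun j : Fin n => ((γ j : ZMod m)) = s)).card = k) :
    n = k * m := by
  classical
  have h1 : (Finset.univ : Finset (Fin n)).card
      = ∑ s : ZMod m, (Finset.univ.filter (fun j : Fin n => ((γ j : ZMod m)) = s)).card :=
    Finset.card_eq_sum_card_fiberwise (fun x _ => Finset.mem_univ _)
  simp only [hcard, Finset.card_univ, Fintype.card_fin, Finset.sum_const, smul_eq_mul] at h1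
  rw [h1, ZMod.card, mul_comm]

theorem exists_resEquiv (m k : ℕ) [NeZero m] (γ : Fin n → ℤ)
    (hcard : ∀ s : ZMod m,
      (Finset.univ.filter (fun j : Fin n => ((γ j : ZMod m)) = s)).card = k) :
    ∃ E : Fin n ≃ ZMod m × Fin k, ∀ j, (E j).1 = (γ j : ZMod m) := by
  classical
  set filt : ZMod m → Finset (Fin n) :=
    fun s => Finset.univ.filter (fun j : Fin n => ((γ j : ZMod m)) = s) with hfilt
  let es : ∀ s, {x // x ∈ filt s} ≃ Fin k := fun s => Finset.equivFinOfCardEq (hcard s)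
  let f : Fin n → ZMod m × Fin k :=
    fun j => ((γ j : ZMod m), es ((γ j : ZMod m)) ⟨j, by simp [hfilt]⟩)
  have hinj : Function.Injective f := by
    have hgf : ∀ j, (((es (f j).1).symm (f j).2 : {x // x ∈ filt (f j).1}) : Fin n) = j := by
      intro j
      simp only [f, Equiv.symm_apply_apply]
    intro j j' h
    rw [← hgf j, ← hgf j']
    congr 1 <;> rw [h]
  have hbij : Function.Bijective f := by
    rw [Fintype.bijective_iff_injective_and_card]
    refine ⟨hinj, ?_⟩
    simp [n_eq m k γ hcard, ZMod.card, mul_comm]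
  exact ⟨Equiv.ofBijective f hbij, fun j => rfl⟩

open Classical in
/-- Block matrix built from a family of `k × k` matrices, supported on the pattern
`(E i).1 = (E j).1 + c`. -/
noncomputable def blk {m k : ℕ} (E : Fin n ≃ ZMod m × Fin k) (c : ZMod m)
    (F : ZMod m → Matrix (Fin k) (Fin k) K) : Matrix (Fin n) (Fin n) K :=
  fun i j => if (E i).1 = (E j).1 + c then F ((E j).1) ((E i).2) ((E j).2) else 0

theorem blk_congr {m k : ℕ} (E : Fin n ≃ ZMod m × Fin k) {c c' : ZMod m}
    {F F' : ZMod m → Matrix (Fin k) (Fin k) K} (hc : c = c') (hF : ∀ s, F s = F' s) :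
    (blk E c F : Matrix (Fin n) (Fin n) K) = blk E c' F' := by
  subst hc
  have : F = F' := funext hF
  subst this
  rfl

theorem blk_mul {m k : ℕ} [NeZero m] (E : Fin n ≃ ZMod m × Fin k) (c c' : ZMod m)
    (F F' : ZMod m → Matrix (Fin k) (Fin k) K) :
    (blk E c F : Matrix (Fin n) (Fin n) K) * blk E c' F'
      = blk E (c + c') (fun s => F (s + c') * F' s) := by
  classical
  funext i j
  rw [Matrix.mul_apply]
  rw [← Equiv.sum_comp E.symm (fun l => blk E c F i l * blk E c' F' l j)]
  rw [Fintype.sum_prod_type]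
  show (∑ s : ZMod m, ∑ t : Fin k, blk E c F i (E.symm (s, t)) * blk E c' F' (E.symm (s, t)) j)
      = blk E (c + c') (fun s => F (s + c') * F' s) i j
  have hsimp : ∀ (s : ZMod m) (t : Fin k),
      blk E c F i (E.symm (s, t)) * blk E c' F' (E.symm (s, t)) j
        = (if (E i).1 = s + c then F s ((E i).2) t else 0)
          * (if s = (E j).1 + c' then F' ((E j).1) t ((E j).2) else 0) := by
    intro s t
    unfold blk
    rw [Equiv.apply_symm_apply]
  simp only [hsimp]
  unfold blk
  by_cases h : (E i).1 = (E j).1 + (c + c')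
  · rw [if_pos h]
    rw [Finset.sum_eq_single ((E j).1 + c')]
    · have hc1 : (E i).1 = ((E j).1 + c') + c := by rw [h]; ring
      show _ = (F ((E j).1 + c') * F' ((E j).1)) ((E i).2) ((E j).2)
      rw [Matrix.mul_apply]
      refine Finset.sum_congr rfl fun t _ => ?_
      rw [if_pos hc1, if_pos rfl]
    · intro s _ hs
      apply Finset.sum_eq_zero
      intro t _
      rw [if_neg hs, mul_zero]
    · intro hs
      exact absurd (Finset.mem_univ _) hs
  · rw [if_neg h]
    apply Finset.sum_eq_zero
    intro s _
    apply Finset.sum_eq_zero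
    intro t _
    by_cases h1 : (E i).1 = s + c
    · by_cases h2 : s = (E j).1 + c'
      · exfalso
        apply h
        rw [h1, h2]; ring
      · rw [if_neg h2, mul_zero]
    · rw [if_neg h1, zero_mul]

theorem blk_one {m k : ℕ} [NeZero m] (E : Fin n ≃ ZMod m × Fin k) :
    (blk E 0 (fun _ => (1 : Matrix (Fin k) (Fin k) K))) = 1 := by
  classical
  funext i j
  unfold blk
  by_cases hij : i = j
  · subst hij
    simp [Matrix.one_apply]
  · rw [Matrix.one_apply_ne hij]
    by_cases h : (E i).1 = (E j).1 + 0
    · rw [if_pos h]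
      show (1 : Matrix (Fin k) (Fin k) K) (E i).2 (E j).2 = 0
      rw [Matrix.one_apply_ne]
      intro h2
      apply hij
      apply E.injective
      apply Prod.ext
      · rw [h]; ring
      · exact h2
    · rw [if_neg h]

theorem blk_gsupp {m k : ℕ} (γ : Fin n → ℤ) (E : Fin n ≃ ZMod m × Fin k)
    (hE : ∀ j, (E j).1 = (γ j : ZMod m)) (d : ℤ) (c : ZMod m) (hc : ((d : ZMod m)) = c)
    (F : ZMod m → Matrix (Fin k) (Fin k) K) : GSupp m γ d (blk E c F) := by
  rw [gsupp_iff]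
  intro i j hne
  unfold blk
  rw [if_neg]
  intro hcond
  apply hne
  rw [hE, hE, ← hc] at hcond
  rw [hcond]; ring

theorem eq_blk {m k : ℕ} (γ : Fin n → ℤ) (E : Fin n ≃ ZMod m × Fin k)
    (hE : ∀ j, (E j).1 = (γ j : ZMod m)) (d : ℤ) (a : Matrix (Fin n) (Fin n) K)
    (ha : GSupp m γ d a) :
    a = blk E ((d : ZMod m))
      (fun s t t' => a (E.symm (s + (d : ZMod m), t)) (E.symm (s, t'))) := by
  classical
  funext i j
  unfold blk
  by_cases h : (E i).1 = (E j).1 + (d : ZMod m)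
  · rw [if_pos h]
    simp only []
    have e1 : ((E j).1 + (d : ZMod m), (E i).2) = E i := by
      rw [← h]
    have e2 : (((E j).1 : ZMod m), (E j).2) = E j := rfl
    rw [e1, e2, Equiv.symm_apply_apply, Equiv.symm_apply_apply]
  · rw [if_neg h]
    refine gsupp_iff.mp ha i j ?_
    intro hcond
    apply h
    rw [hE, hE, hcond]
    ring

theorem key {m k : ℕ} [NeZero m] (γ : Fin n → ℤ) (E : Fin n ≃ ZMod m × Fin k)
    (hE : ∀ j, (E j).1 = (γ j : ZMod m)) (d : ℤ) (a : Matrix (Fin n) (Fin n) K)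
    (ha : GSupp m γ d a) :
    ∃ u v : Matrix (Fin n) (Fin n) K, GSupp m γ (-d) u ∧ GSupp m γ d v ∧
      u * v = 1 ∧ v * u = 1 ∧ a * u * a = a := by
  classical
  set d' : ZMod m := ((d : ZMod m)) with hd'
  set N : ZMod m → Matrix (Fin k) (Fin k) K :=
    fun s t t' => a (E.symm (s + d', t)) (E.symm (s, t')) with hN
  choose X Y hXY hYX hNXN using fun s => matrix_exists_unit_inner_inverse (N s)
  have hrepr : a = blk E d' N := eq_blk γ E hE d a ha
  refine ⟨blk E (-d') (fun s => X (s - d')), blk E d' Y, ?_, ?_, ?_, ?_, ?_⟩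
  · refine blk_gsupp γ E hE (-d) (-d') (by push_cast [hd']; ring) _
  · exact blk_gsupp γ E hE d d' rfl _
  · rw [blk_mul,
      blk_congr E (F' := fun _ => 1) (neg_add_cancel d')
        (fun s => by rw [add_sub_cancel_right, hXY]),
      blk_one]
  · rw [blk_mul,
      blk_congr E (F' := fun _ => 1) (add_neg_cancel d')
        (fun s => by rw [show s + -d' = s - d' by ring, hYX]),
      blk_one]
  · rw [hrepr, blk_mul, blk_mul,
      blk_congr E (F' := N) (show d' + -d' + d' = d' by ring)
        (fun s => by
          rw [show s + d' + -d' = s by ring, show s + d' - d' = s by ring, hNXN])]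

theorem card_step {m : ℕ} [NeZero m] (γ : Fin n → ℤ) (u v : Matrix (Fin n) (Fin n) K)
    (hu : GSupp m γ (-1) u) (hv : GSupp m γ 1 v) (huv : u * v = 1) (hvu : v * u = 1)
    (s : ZMod m) :
    (Finset.univ.filter (fun j : Fin n => ((γ j : ZMod m)) = s + 1)).card
      = (Finset.univ.filter (fun j : Fin n => ((γ j : ZMod m)) = s)).card := by
  classical
  set P := Finset.univ.filter (fun j : Fin n => ((γ j : ZMod m)) = s + 1) with hP
  set Q := Finset.univ.filter (fun j : Fin n => ((γ j : ZMod m)) = s) with hQ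
  have hu' := gsupp_iff.mp hu
  have hv' := gsupp_iff.mp hv
  have hmemP : ∀ x : {a // a ∈ P}, ((γ x.1 : ZMod m)) = s + 1 := fun x =>
    (Finset.mem_filter.mp x.2).2
  have hmemQ : ∀ x : {a // a ∈ Q}, ((γ x.1 : ZMod m)) = s := fun x =>
    (Finset.mem_filter.mp x.2).2
  have honeZ : (((1 : ℤ) : ZMod m)) = 1 := by push_cast; rfl
  have hnegoneZ : (((-1 : ℤ) : ZMod m)) = -1 := by push_cast; rfl
  let B : Matrix {a // a ∈ P} {a // a ∈ Q} K := fun i j => v i.1 j.1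
  let Cm : Matrix {a // a ∈ Q} {a // a ∈ P} K := fun i j => u i.1 j.1
  have hBC : B * Cm = 1 := by
    funext i j
    rw [Matrix.mul_apply]
    have e1 : ∑ l : {a // a ∈ Q}, B i l * Cm l j = ∑ l ∈ Q, v i.1 l * u l j.1 :=
      Finset.sum_coe_sort Q (fun l => v i.1 l * u l j.1)
    rw [e1]
    have e2 : ∑ l ∈ Q, v i.1 l * u l j.1 = ∑ l : Fin n, v i.1 l * u l j.1 := by
      apply Finset.sum_subset (Finset.subset_univ Q)
      intro l _ hl
      have hres : ((γ l : ZMod m)) ≠ s := by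
        intro hres
        exact hl (Finset.mem_filter.mpr ⟨Finset.mem_univ _, hres⟩)
      have : v i.1 l = 0 := by
        apply hv' i.1 l
        rw [honeZ, hmemP i]
        intro hcontra
        apply hres
        have : (1 : ZMod m) + ((γ l : ZMod m)) = 1 + s := by rw [← hcontra]; ring
        exact add_left_cancel this
      rw [this, zero_mul]
    rw [e2, ← Matrix.mul_apply, hvu]
    by_cases hij : i = j
    · subst hij
      rw [Matrix.one_apply_eq, Matrix.one_apply_eq]
    · rw [Matrix.one_apply_ne hij, Matrix.one_apply_ne (fun hc => hij (Subtype.ext hc))]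
  have hCB : Cm * B = 1 := by
    funext i j
    rw [Matrix.mul_apply]
    have e1 : ∑ l : {a // a ∈ P}, Cm i l * B l j = ∑ l ∈ P, u i.1 l * v l j.1 :=
      Finset.sum_coe_sort P (fun l => u i.1 l * v l j.1)
    rw [e1]
    have e2 : ∑ l ∈ P, u i.1 l * v l j.1 = ∑ l : Fin n, u i.1 l * v l j.1 := by
      apply Finset.sum_subset (Finset.subset_univ P)
      intro l _ hl
      have hres : ((γ l : ZMod m)) ≠ s + 1 := by
        intro hres
        exact hl (Finset.mem_filter.mpr ⟨Finset.mem_univ _, hres⟩)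
      have : v l j.1 = 0 := by
        apply hv' l j.1
        rw [honeZ, hmemQ j]
        intro hcontra
        apply hres
        rw [hcontra]; ring
      rw [this, mul_zero]
    rw [e2, ← Matrix.mul_apply, huv]
    by_cases hij : i = j
    · subst hij
      rw [Matrix.one_apply_eq, Matrix.one_apply_eq]
    · rw [Matrix.one_apply_ne hij, Matrix.one_apply_ne (fun hc => hij (Subtype.ext hc))]
  have := card_eq_of_mul_eq_one B Cm hBC hCB
  rwa [Fintype.card_coe, Fintype.card_coe] at this

end LMGUR

/-- Let `K` be a field, `m ≥ 1`, `n ≥ 1`, and `γ : Fin n → ℤ` a shift vector attaining every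
residue class modulo `m`.  Then the `ℤ`-graded matrix ring `Mₙ(K[x^m, x^{-m}])(γ)` is graded
unit-regular iff `n = k*m` for some `k ≥ 1` such that each residue modulo `m` is attained by
exactly `k` of the shifts. -/
theorem laurent_matrix_gradedUnitRegular_iff {K : Type*} [Field K] {m n : ℕ}
    (hm : 1 ≤ m) (hn : 1 ≤ n) (γ : Fin n → ℤ)
    (hsur : ∀ r : ZMod m, ∃ j : Fin n, ((γ j : ZMod m) = r)) :
    (∀ d : ℤ, ∀ A : Matrix (Fin n) (Fin n) (LaurentPolynomial K),
      MatrixHomogeneousLaurent m γ d A →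
      ∃ U V : Matrix (Fin n) (Fin n) (LaurentPolynomial K),
        MatrixHomogeneousLaurent m γ (-d) U ∧ MatrixHomogeneousLaurent m γ d V ∧
        U * V = 1 ∧ V * U = 1 ∧ A * U * A = A) ↔
    (∃ k : ℕ, 0 < k ∧ n = k * m ∧
      ∀ r : ZMod m,
        (Finset.univ.filter (fun j : Fin n => (γ j : ZMod m) = r)).card = k) := by
  haveI : NeZero m := ⟨by omega⟩
  constructor
  · intro hreg
    have h0 : MatrixHomogeneousLaurent m γ 1
        (0 : Matrix (Fin n) (Fin n) (LaurentPolynomial K)) := by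
      intro i j
      exact ⟨fun h => ⟨0, by simp⟩, fun _ => by simp⟩
    obtain ⟨U, V, hU, hV, hUV, hVU, -⟩ := hreg 1 0 h0
    obtain ⟨u, hu, rfl⟩ := LMGUR.exists_coeff hU
    obtain ⟨v, hv, rfl⟩ := LMGUR.exists_coeff hV
    have huv : u * v = 1 := by
      rw [LMGUR.toL_mul m γ (-1) 1 u v hu hv, show (-1 + 1 : ℤ) = 0 by ring] at hUV
      have hsupp : LMGUR.GSupp m γ 0 (u * v) := by
        have := LMGUR.GSupp_mul hu hv
        rwa [show (-1 + 1 : ℤ) = 0 by ring] at this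
      apply LMGUR.toL_inj hsupp (LMGUR.GSupp_one m γ)
      rw [hUV, LMGUR.toL_one]
    have hvu : v * u = 1 := by
      rw [LMGUR.toL_mul m γ 1 (-1) v u hv hu, show (1 + -1 : ℤ) = 0 by ring] at hVU
      have hsupp : LMGUR.GSupp m γ 0 (v * u) := by
        have := LMGUR.GSupp_mul hv hu
        rwa [show (1 + -1 : ℤ) = 0 by ring] at this
      apply LMGUR.toL_inj hsupp (LMGUR.GSupp_one m γ)
      rw [hVU, LMGUR.toL_one]
    have hstep := LMGUR.card_step γ u v hu hv huv hvu
    have hconst : ∀ s : ZMod m,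
        (Finset.univ.filter (fun j : Fin n => ((γ j : ZMod m)) = s)).card
          = (Finset.univ.filter (fun j : Fin n => ((γ j : ZMod m)) = (0 : ZMod m))).card := by
      have hnat : ∀ p : ℕ,
          (Finset.univ.filter (fun j : Fin n => ((γ j : ZMod m)) = ((p : ℕ) : ZMod m))).card
            = (Finset.univ.filter (fun j : Fin n => ((γ j : ZMod m)) = (0 : ZMod m))).card := by
        intro p
        induction p with
        | zero => rw [Nat.cast_zero]
        | succ q ih =>
          have h1 : ((q + 1 : ℕ) : ZMod m) = ((q : ℕ) : ZMod m) + 1 := by push_cast; ring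
          rw [h1, hstep, ih]
      intro s
      have := hnat s.val
      rwa [ZMod.natCast_rightInverse s] at this
    refine ⟨(Finset.univ.filter (fun j : Fin n => ((γ j : ZMod m)) = (0 : ZMod m))).card,
      ?_, ?_, fun r => hconst r⟩
    · obtain ⟨j, hj⟩ := hsur 0
      exact Finset.card_pos.mpr
        ⟨j, Finset.mem_filter.mpr ⟨Finset.mem_univ _, hj⟩⟩
    · exact LMGUR.n_eq m _ γ (fun s => hconst s)
  · rintro ⟨k, hk, hnk, hcard⟩ d A hA
    obtain ⟨E, hE⟩ := LMGUR.exists_resEquiv m k γ hcard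
    obtain ⟨a, ha, rfl⟩ := LMGUR.exists_coeff hA
    obtain ⟨u, v, hu, hv, huv, hvu, haua⟩ := LMGUR.key γ E hE d a ha
    refine ⟨LMGUR.toL m γ (-d) u, LMGUR.toL m γ d v,
      LMGUR.toL_homog m γ (-d) u, LMGUR.toL_homog m γ d v, ?_, ?_, ?_⟩
    · rw [LMGUR.toL_mul m γ (-d) d u v hu hv, neg_add_cancel, huv, LMGUR.toL_one]
    · rw [LMGUR.toL_mul m γ d (-d) v u hv hu, add_neg_cancel, hvu, LMGUR.toL_one]
    · rw [LMGUR.toL_mul m γ d (-d) a u ha hu]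
      have hsupp : LMGUR.GSupp m γ (d + -d) (a * u) := LMGUR.GSupp_mul ha hu
      rw [LMGUR.toL_mul m γ (d + -d) d (a * u) a hsupp ha,
        show d + -d + d = d by ring, haua]
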